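/- Let A be an (n+1)×(n+1) orthogonal matrix with first column (1/√(n+1))𝟙_{n+1}, blocks as in the reduction construction with a ≥ 0, and let Ã be the resulting n×n orthogonal matrix. Then ‖Ã‖ ≤ ‖A‖·((n+1)/n + √((n+1)/n)·‖A‖), where ‖·‖ is the max-entry norm. -/

import Mathlib

open Real Matrix

/-!
The first-column entry `1/√n` of `Ã` equals `1/√(n+1) · √((n+1)/n) ≤ ‖A‖ (n+1)/n`. In the other entries `a ≥ 0` gives
`(√(n/(n+1)) + a)⁻¹ ≤ √((n+1)/n)`, and `√((n+1)/n) · 1/√(n(n+1)) = 1/n` turns the constant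
term into the extra `‖A‖/n`.
-/

/-- The maximum absolute value of the entries of a real matrix. -/
noncomputable def maxEntry {m n : Type*} [Fintype m] [Fintype n]
    (A : Matrix m n ℝ) : ℝ := ⨆ i : m, ⨆ j : n, |A i j|

section MaxEntry

variable {m n : Type*} [Fintype m] [Fintype n]

lemma abs_le_maxEntry (A : Matrix m n ℝ) (i : m) (j : n) : |A i j| ≤ maxEntry A :=
  (le_ciSup (f := fun j => |A i j|) (Finite.bddAbove_range _) j).trans
    (le_ciSup (f := fun i => ⨆ j, |A i j|) (Finite.bddAbove_range _) i)

lemma maxEntry_le [Nonempty m] [Nonempty n] {A : Matrix m n ℝ} {R : ℝ}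
    (h : ∀ i j, |A i j| ≤ R) : maxEntry A ≤ R :=
  ciSup_le fun i => ciSup_le fun j => h i j

end MaxEntry

section ReducedEntries

variable {n M : ℝ}

lemma sqrt_succ_div_mul_inv_sqrt_mul_succ (hn : 0 < n) :
    √((n + 1) / n) * (1 / √(n * (n + 1))) = 1 / n := by
  have hn1 : 0 < n + 1 := by linarith
  rw [sqrt_div hn1.le, sqrt_mul hn.le]
  field_simp
  rw [sq_sqrt hn.le]

lemma inv_sqrt_le_of_inv_sqrt_succ_le (hn : 0 < n) (hM : 1 / √(n + 1) ≤ M) :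
    1 / √n ≤ M * ((n + 1) / n + √((n + 1) / n) * M) := by
  have hn1 : 0 < n + 1 := by linarith
  have hM0 : 0 ≤ M := (by positivity : (0 : ℝ) ≤ 1 / √(n + 1)).trans hM
  have hr : 1 ≤ (n + 1) / n := by rw [le_div_iff₀ hn]; linarith
  calc 1 / √n = 1 / √(n + 1) * √((n + 1) / n) := by
        rw [sqrt_div hn1.le]; field_simp
    _ ≤ M * ((n + 1) / n) := by
        gcongr
        calc √((n + 1) / n) ≤ √((n + 1) / n) * √((n + 1) / n) :=
              le_mul_of_one_le_right (sqrt_nonneg _) (one_le_sqrt.2 hr)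
          _ = (n + 1) / n := mul_self_sqrt (by positivity)
    _ ≤ M * ((n + 1) / n + √((n + 1) / n) * M) := by
        gcongr
        exact le_add_of_nonneg_right (by positivity)

lemma abs_add_inv_mul_le {x v u c : ℝ} (hn : 0 < n) (hx : |x| ≤ M) (hv : |v| ≤ M)
    (hu : |u| ≤ M) (hc : √(n / (n + 1)) ≤ c) :
    |x + c⁻¹ * ((-v + 1 / √(n * (n + 1))) * u)| ≤
      M * ((n + 1) / n + √((n + 1) / n) * M) := by
  have hM0 : 0 ≤ M := (abs_nonneg x).trans hx
  set s := 1 / √(n * (n + 1))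
  have hs : 0 < s := by positivity
  have hc0 : 0 < √(n / (n + 1)) := sqrt_pos.2 (by positivity)
  have hcinv : |c⁻¹| ≤ √((n + 1) / n) := by
    rw [abs_of_pos (inv_pos.2 (hc0.trans_le hc)), ← inv_div, sqrt_inv]
    exact inv_anti₀ hc0 hc
  have hvs : |-v + s| ≤ M + s := by
    calc |-v + s| ≤ |-v| + |s| := abs_add_le _ _
      _ ≤ M + s := by rw [abs_neg, abs_of_pos hs]; linarith
  calc |x + c⁻¹ * ((-v + s) * u)| ≤ |x| + |c⁻¹| * (|-v + s| * |u|) := by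
        rw [← abs_mul, ← abs_mul]; exact abs_add_le _ _
    _ ≤ M + √((n + 1) / n) * ((M + s) * M) := by gcongr
    _ = M * (1 + √((n + 1) / n) * s) + √((n + 1) / n) * M * M := by ring
    _ = M * ((n + 1) / n + √((n + 1) / n) * M) := by
        rw [sqrt_succ_div_mul_inv_sqrt_mul_succ hn]; field_simp

end ReducedEntries

/-- Norm bound for the reduction construction (n = m+1): if A is an (n+1)×(n+1)
orthogonal matrix with first column (1/√(n+1))𝟙, blocks a ≥ 0, u, v, X, and Ã is the
reduced n×n matrix, then ‖Ã‖ ≤ ‖A‖·((n+1)/n + √((n+1)/n)·‖A‖). -/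
theorem stmt15 (m : ℕ) (A : Matrix (Fin (m + 2)) (Fin (m + 2)) ℝ)
    (hcol : ∀ i, A i 0 = 1 / Real.sqrt (m + 2))
    (a : ℝ) (u : Fin m → ℝ) (v : Fin (m + 1) → ℝ)
    (X : Matrix (Fin (m + 1)) (Fin m) ℝ)
    (hu : ∀ j : Fin m, u j = A 0 ⟨j.1 + 2, by omega⟩)
    (hv : ∀ i : Fin (m + 1), v i = A i.succ 1)
    (hX : ∀ (i : Fin (m + 1)) (j : Fin m), X i j = A i.succ ⟨j.1 + 2, by omega⟩)
    (hge : 0 ≤ a)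
    (At : Matrix (Fin (m + 1)) (Fin (m + 1)) ℝ)
    (hAt0 : ∀ i, At i 0 = 1 / Real.sqrt (m + 1))
    (hAt : ∀ (i : Fin (m + 1)) (j : Fin m),
      At i j.succ = X i j +
        (Real.sqrt ((m + 1) / (m + 2)) + a)⁻¹ *
          ((-v i + 1 / Real.sqrt ((m + 1) * (m + 2))) * u j)) :
    maxEntry At ≤ maxEntry A *
      ((m + 2) / (m + 1) + Real.sqrt ((m + 2) / (m + 1)) * maxEntry A) := by
  have hn : (0 : ℝ) < m + 1 := by positivity
  have hsucc : (m : ℝ) + 2 = m + 1 + 1 := by ring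
  rw [hsucc] at hcol hAt ⊢
  refine maxEntry_le fun i j => ?_
  cases j using Fin.cases with
  | zero =>
    rw [hAt0, abs_of_pos (by positivity)]
    refine inv_sqrt_le_of_inv_sqrt_succ_le hn ?_
    simpa [hcol 0, abs_of_pos (by positivity : 0 < √((m : ℝ) + 1 + 1))] using
      abs_le_maxEntry A 0 0
  | succ j =>
    rw [hAt]
    refine abs_add_inv_mul_le hn ?_ ?_ ?_ (le_add_of_nonneg_right hge)
    · rw [hX]; exact abs_le_maxEntry A _ _
    · rw [hv]; exact abs_le_maxEntry A _ _
    · rw [hu]; exact abs_le_maxEntry A _ _
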